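/- Let A and B be n×n complex positive definite matrices, and let Φ be a normalized positive linear map from n×n complex matrices to m×m complex matrices such that Φ(A) and Φ(B) are positive definite. Then for every p ∈ (0,1], with r := min{p, 1−p} and R := max{p, 1−p}, one has (2r/p)·(Φ(A ∇ B) − Φ(A) # Φ(B)) + T_p(Φ(A)|Φ(B)) ≤ Φ(B − A) ≤ (2R/p)·(Φ(A ∇ B) − Φ(A # B)) + Φ(T_p(A|B)) in the Loewner order. -/

import Mathlib

open Matrix ComplexOrder

/-- Real power of a (Hermitian) complex matrix via the continuous functional calculus,
corresponding to `Matrix.PosDef.rpow` on positive definite matrices. -/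
noncomputable def mrpow {n : Type*} [Fintype n] [DecidableEq n]
    (A : Matrix n n ℂ) (r : ℝ) : Matrix n n ℂ :=
  cfc (fun t : ℝ => t ^ r) A

/-- The Loewner order: `loe X Y` means `Y - X` is positive semidefinite. -/
def loe {n : Type*} [Fintype n] (X Y : Matrix n n ℂ) : Prop :=
  (Y - X).PosSemidef

/-- `A ♮ᵣ B = A^{1/2} (A^{-1/2} B A^{-1/2})^r A^{1/2}`; for `r ∈ [0,1]` this is the
weighted geometric mean `A #ᵣ B`. -/
noncomputable def natu {n : Type*} [Fintype n] [DecidableEq n]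
    (A B : Matrix n n ℂ) (r : ℝ) : Matrix n n ℂ :=
  mrpow A (1 / 2) * mrpow (mrpow A (-(1 / 2)) * B * mrpow A (-(1 / 2))) r * mrpow A (1 / 2)

/-- The Tsallis relative operator entropy `T_p(A|B) = (A #_p B - A) / p`. -/
noncomputable def TsallisEntropy {n : Type*} [Fintype n] [DecidableEq n]
    (A B : Matrix n n ℂ) (p : ℝ) : Matrix n n ℂ :=
  (1 / p : ℝ) • (natu A B p - A)


/-! With `X = A^{-1/2} B A^{-1/2}`, every matrix in the statement is `A^{1/2} f(X) A^{1/2}` for a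
combination `f` of `1, x, x^{1/2}, x^p`, and congruence by `A^{1/2}` preserves the Loewner order.
So both inequalities reduce to the scalar bounds
`min(p,1-p) (√x - 1)² ≤ 1 - p + p x - x^p ≤ max(p,1-p) (√x - 1)²` on `x ≥ 0`, each of which is a
weighted AM–GM inequality. The lower bound is then applied to `Φ A, Φ B`; the upper bound is
applied to `A, B` and pushed through the positive map `Φ`. -/

open scoped MatrixOrder

lemma rpow_le_weighted_sum {x w₁ w₂ s t e : ℝ} (hx : 0 < x) (hw₁ : 0 ≤ w₁) (hw₂ : 0 ≤ w₂)
    (hw : w₁ + w₂ = 1) (he : w₁ * s + w₂ * t = e) : x ^ e ≤ w₁ * x ^ s + w₂ * x ^ t := by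
  simpa [← he] using (convexOn_rpow_left hx).2 (Set.mem_univ s) (Set.mem_univ t) hw₁ hw₂ hw

lemma rpow_half_sq {x : ℝ} (hx : 0 ≤ x) : (x ^ (1 / 2 : ℝ)) ^ 2 = x := by
  rw [← Real.sqrt_eq_rpow, Real.sq_sqrt hx]

lemma young_gap_bounds_of_le_half {p x : ℝ} (hp0 : 0 ≤ p) (hp : p ≤ 1 / 2) (hx : 0 < x) :
    p * (x ^ (1 / 2 : ℝ) - 1) ^ 2 ≤ 1 - p + p * x - x ^ p ∧
      1 - p + p * x - x ^ p ≤ (1 - p) * (x ^ (1 / 2 : ℝ) - 1) ^ 2 := by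
  have hq : 0 < 1 - p := by linarith
  have hlow : x ^ p ≤ (1 - 2 * p) * x ^ (0 : ℝ) + 2 * p * x ^ (1 / 2 : ℝ) :=
    rpow_le_weighted_sum hx (by linarith) (by linarith) (by ring) (by ring)
  have hupp : x ^ (1 / 2 : ℝ) ≤
      (1 - 2 * p) / (2 * (1 - p)) * x ^ (1 : ℝ) + 1 / (2 * (1 - p)) * x ^ p :=
    rpow_le_weighted_sum hx (div_nonneg (by linarith) (by positivity)) (by positivity)
      (by field_simp; ring) (by field_simp; ring)
  rw [Real.rpow_zero] at hlow
  rw [Real.rpow_one] at hupp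
  field_simp at hupp
  have hsq := rpow_half_sq hx.le
  constructor <;> nlinarith

lemma young_gap_bounds_of_half_le {p x : ℝ} (hp : 1 / 2 ≤ p) (hp1 : p ≤ 1) (hx : 0 < x) :
    (1 - p) * (x ^ (1 / 2 : ℝ) - 1) ^ 2 ≤ 1 - p + p * x - x ^ p ∧
      1 - p + p * x - x ^ p ≤ p * (x ^ (1 / 2 : ℝ) - 1) ^ 2 := by
  have hq : 0 < p := by linarith
  have hlow : x ^ p ≤ (2 * p - 1) * x ^ (1 : ℝ) + (2 - 2 * p) * x ^ (1 / 2 : ℝ) :=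
    rpow_le_weighted_sum hx (by linarith) (by linarith) (by ring) (by ring)
  have hupp : x ^ (1 / 2 : ℝ) ≤ 1 / (2 * p) * x ^ p + (2 * p - 1) / (2 * p) * x ^ (0 : ℝ) :=
    rpow_le_weighted_sum hx (by positivity) (div_nonneg (by linarith) (by positivity))
      (by field_simp; ring) (by field_simp; ring)
  rw [Real.rpow_one] at hlow
  rw [Real.rpow_zero] at hupp
  field_simp at hupp
  have hsq := rpow_half_sq hx.le
  constructor <;> nlinarith

lemma young_gap_bounds {p x : ℝ} (hp0 : 0 < p) (hp1 : p ≤ 1) (hx : 0 ≤ x) :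
    min p (1 - p) * (x ^ (1 / 2 : ℝ) - 1) ^ 2 ≤ 1 - p + p * x - x ^ p ∧
      1 - p + p * x - x ^ p ≤ max p (1 - p) * (x ^ (1 / 2 : ℝ) - 1) ^ 2 := by
  rcases hx.eq_or_lt with rfl | hx
  · simp [Real.zero_rpow hp0.ne']
  rcases le_total p (1 / 2) with hp | hp
  · rw [min_eq_left (by linarith), max_eq_right (by linarith)]
    exact young_gap_bounds_of_le_half hp0.le hp hx
  · rw [min_eq_right (by linarith), max_eq_left (by linarith)]
    exact young_gap_bounds_of_half_le hp hp1 hx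

section Matrices

variable {n : Type*} [Fintype n] [DecidableEq n]

lemma mrpow_mul_mrpow {A : Matrix n n ℂ} (hA : A.PosDef) (r s : ℝ) :
    mrpow A r * mrpow A s = mrpow A (r + s) := by
  have hfin := A.finite_real_spectrum
  rw [mrpow, mrpow, mrpow, ← cfc_mul _ _ A (hfin.continuousOn _) (hfin.continuousOn _)]
  exact cfc_congr fun x hx => (Real.rpow_add (hA.isStrictlyPositive.spectrum_pos hx) r s).symm

lemma mrpow_zero {A : Matrix n n ℂ} (hA : A.IsHermitian) : mrpow A 0 = 1 := by
  simp only [mrpow, Real.rpow_zero]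
  exact cfc_const_one ℝ A hA

lemma mrpow_one {A : Matrix n n ℂ} (hA : A.IsHermitian) : mrpow A 1 = A := by
  simp only [mrpow, Real.rpow_one]
  exact cfc_id' ℝ A hA

lemma mrpow_isHermitian (A : Matrix n n ℂ) (r : ℝ) : (mrpow A r).IsHermitian :=
  cfc_predicate _ A

noncomputable def whiten (A B : Matrix n n ℂ) : Matrix n n ℂ :=
  mrpow A (-(1 / 2)) * B * mrpow A (-(1 / 2))

lemma whiten_isHermitian (A : Matrix n n ℂ) {B : Matrix n n ℂ} (hB : B.IsHermitian) :
    (whiten A B).IsHermitian := by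
  have h := isHermitian_conjTranspose_mul_mul (mrpow A (-(1 / 2))) hB
  rwa [(mrpow_isHermitian A _).eq] at h

lemma whiten_posSemidef (A : Matrix n n ℂ) {B : Matrix n n ℂ} (hB : B.PosSemidef) :
    (whiten A B).PosSemidef := by
  have h := hB.conjTranspose_mul_mul_same (mrpow A (-(1 / 2)))
  rwa [(mrpow_isHermitian A _).eq] at h

lemma mrpow_half_mul_whiten_mul_mrpow_half {A : Matrix n n ℂ} (hA : A.PosDef)
    (B : Matrix n n ℂ) :
    mrpow A (1 / 2) * whiten A B * mrpow A (1 / 2) = B := by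
  have h := mrpow_mul_mrpow hA (1 / 2) (-(1 / 2))
  have h' := mrpow_mul_mrpow hA (-(1 / 2)) (1 / 2)
  rw [add_neg_cancel, mrpow_zero hA.isHermitian] at h
  rw [neg_add_cancel, mrpow_zero hA.isHermitian] at h'
  simp only [whiten, ← Matrix.mul_assoc, h, Matrix.one_mul]
  rw [Matrix.mul_assoc, h', Matrix.mul_one]

lemma mrpow_half_mul_mrpow_half {A : Matrix n n ℂ} (hA : A.PosDef) :
    mrpow A (1 / 2) * mrpow A (1 / 2) = A := by
  rw [mrpow_mul_mrpow hA, add_halves, mrpow_one hA.isHermitian]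

lemma conj_cfc_whiten_eq_combination_natu {A B : Matrix n n ℂ} (hA : A.PosDef)
    (hB : B.IsHermitian) (a b c d q r : ℝ) :
    mrpow A (1 / 2) * cfc (fun x : ℝ => a + b * x + c * x ^ q + d * x ^ r) (whiten A B) *
        mrpow A (1 / 2) =
      a • A + b • B + c • natu A B q + d • natu A B r := by
  let X := whiten A B
  have hX : IsSelfAdjoint X := whiten_isHermitian A hB
  have hcont (f : ℝ → ℝ) : ContinuousOn f (spectrum ℝ X) := X.finite_real_spectrum.continuousOn f
  rw [cfc_add X (fun x => a + b * x + c * x ^ q) (fun x => d * x ^ r) (hcont _) (hcont _),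
    cfc_add X (fun x => a + b * x) (fun x => c * x ^ q) (hcont _) (hcont _),
    cfc_const_add a (fun x => b * x) X (hcont _) hX, cfc_const_mul_id b X hX,
    cfc_const_mul c (fun x => x ^ q) X (hcont _), cfc_const_mul d (fun x => x ^ r) X (hcont _)]
  simp only [Algebra.algebraMap_eq_smul_one, Matrix.mul_add, Matrix.add_mul, Matrix.mul_smul,
    Matrix.smul_mul, Matrix.mul_one, mrpow_half_mul_mrpow_half hA]
  rw [mrpow_half_mul_whiten_mul_mrpow_half hA]
  rfl

lemma combination_natu_le_combination_natu {A B : Matrix n n ℂ} (hA : A.PosDef)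
    (hB : B.PosSemidef) {a b c d a' b' c' d' q r : ℝ}
    (h : ∀ x : ℝ, 0 ≤ x →
      a + b * x + c * x ^ q + d * x ^ r ≤ a' + b' * x + c' * x ^ q + d' * x ^ r) :
    a • A + b • B + c • natu A B q + d • natu A B r ≤
      a' • A + b' • B + c' • natu A B q + d' • natu A B r := by
  rw [← conj_cfc_whiten_eq_combination_natu hA hB.isHermitian,
    ← conj_cfc_whiten_eq_combination_natu hA hB.isHermitian]
  have hfin := (whiten A B).finite_real_spectrum
  refine (mrpow_isHermitian A _).isSelfAdjoint.conjugate_le_conjugate ?_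
  exact cfc_mono (fun x hx => h x (spectrum_nonneg_of_nonneg (whiten_posSemidef A hB).nonneg hx))
    (hfin.continuousOn _) (hfin.continuousOn _)

variable {A B : Matrix n n ℂ} {p : ℝ}

lemma combination_sub_eq_young_gap_div (hp : p ≠ 0) {x : ℝ} (hx : 0 ≤ x) (k : ℝ) :
    -1 + x - ((k - 1) / p + k / p * x + -(2 * k / p) * x ^ (1 / 2 : ℝ) + 1 / p * x ^ p) =
      (1 - p + p * x - x ^ p - k * (x ^ (1 / 2 : ℝ) - 1) ^ 2) / p := by
  field_simp
  linear_combination k * rpow_half_sq hx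

lemma smul_amgmGap_add_tsallisEntropy_eq (k : ℝ) :
    (2 * k / p) • ((1 / 2 : ℝ) • (A + B) - natu A B (1 / 2)) + TsallisEntropy A B p =
      ((k - 1) / p) • A + (k / p) • B + -(2 * k / p) • natu A B (1 / 2) +
        (1 / p) • natu A B p := by
  unfold TsallisEntropy
  module

lemma sub_eq_combination_natu (A B : Matrix n n ℂ) :
    B - A = (-1 : ℝ) • A + (1 : ℝ) • B + (0 : ℝ) • natu A B (1 / 2) + (0 : ℝ) • natu A B p := by
  module

lemma min_smul_amgmGap_add_tsallisEntropy_loe_sub (hA : A.PosDef) (hB : B.PosSemidef)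
    (hp0 : 0 < p) (hp1 : p ≤ 1) :
    loe ((2 * min p (1 - p) / p) • ((1 / 2 : ℝ) • (A + B) - natu A B (1 / 2))
      + TsallisEntropy A B p) (B - A) := by
  rw [loe, ← Matrix.le_iff, smul_amgmGap_add_tsallisEntropy_eq, sub_eq_combination_natu A B]
  refine combination_natu_le_combination_natu hA hB fun x hx => ?_
  rw [← sub_nonneg, one_mul, zero_mul, zero_mul, add_zero, add_zero,
    combination_sub_eq_young_gap_div hp0.ne' hx]
  exact div_nonneg (sub_nonneg.2 (young_gap_bounds hp0 hp1 hx).1) hp0.le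

lemma sub_loe_max_smul_amgmGap_add_tsallisEntropy (hA : A.PosDef) (hB : B.PosSemidef)
    (hp0 : 0 < p) (hp1 : p ≤ 1) :
    loe (B - A) ((2 * max p (1 - p) / p) • ((1 / 2 : ℝ) • (A + B) - natu A B (1 / 2))
      + TsallisEntropy A B p) := by
  rw [loe, ← Matrix.le_iff, smul_amgmGap_add_tsallisEntropy_eq, sub_eq_combination_natu A B]
  refine combination_natu_le_combination_natu hA hB fun x hx => ?_
  rw [← sub_nonneg, one_mul, zero_mul, zero_mul, add_zero, add_zero, ← neg_sub,
    combination_sub_eq_young_gap_div hp0.ne' hx, ← neg_div]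
  exact div_nonneg (by linarith [(young_gap_bounds hp0 hp1 hx).2]) hp0.le

end Matrices

lemma loe_map {n m : Type*} [Fintype n] [Fintype m] {Φ : Matrix n n ℂ →ₗ[ℂ] Matrix m m ℂ}
    (hΦ : ∀ X : Matrix n n ℂ, X.PosSemidef → (Φ X).PosSemidef) {X Y : Matrix n n ℂ}
    (h : loe X Y) : loe (Φ X) (Φ Y) := by
  rw [loe, ← map_sub]
  exact hΦ _ h

theorem stmt16_general {n m : Type*} [Fintype n] [DecidableEq n] [Fintype m] [DecidableEq m]
    {A B : Matrix n n ℂ} (hA : A.PosDef) (hB : B.PosDef)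
    (Φ : Matrix n n ℂ →ₗ[ℂ] Matrix m m ℂ)
    (hΦpos : ∀ X : Matrix n n ℂ, X.PosSemidef → (Φ X).PosSemidef)
    (hΦA : (Φ A).PosDef) (hΦB : (Φ B).PosDef)
    {p : ℝ} (hp0 : 0 < p) (hp1 : p ≤ 1) :
    loe ((2 * min p (1 - p) / p) • (Φ ((1 / 2 : ℝ) • (A + B)) - natu (Φ A) (Φ B) (1 / 2))
          + TsallisEntropy (Φ A) (Φ B) p)
      (Φ (B - A)) ∧
    loe (Φ (B - A))
      ((2 * max p (1 - p) / p) • (Φ ((1 / 2 : ℝ) • (A + B)) - Φ (natu A B (1 / 2)))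
          + Φ (TsallisEntropy A B p)) := by
  constructor
  · rw [LinearMap.map_smul_of_tower, map_add, map_sub]
    exact min_smul_amgmGap_add_tsallisEntropy_loe_sub hΦA hΦB.posSemidef hp0 hp1
  · simpa only [map_add, map_sub, LinearMap.map_smul_of_tower] using
      loe_map hΦpos (sub_loe_max_smul_amgmGap_add_tsallisEntropy hA hB.posSemidef hp0 hp1)

theorem stmt16 {n m : Type*} [Fintype n] [DecidableEq n] [Fintype m] [DecidableEq m]
    {A B : Matrix n n ℂ} (hA : A.PosDef) (hB : B.PosDef)
    (Φ : Matrix n n ℂ →ₗ[ℂ] Matrix m m ℂ)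
    (hΦpos : ∀ X : Matrix n n ℂ, X.PosSemidef → (Φ X).PosSemidef)
    (hΦ1 : Φ 1 = 1)
    (hΦA : (Φ A).PosDef) (hΦB : (Φ B).PosDef)
    {p : ℝ} (hp0 : 0 < p) (hp1 : p ≤ 1) :
    loe ((2 * min p (1 - p) / p) • (Φ ((1 / 2 : ℝ) • (A + B)) - natu (Φ A) (Φ B) (1 / 2))
          + TsallisEntropy (Φ A) (Φ B) p)
      (Φ (B - A)) ∧
    loe (Φ (B - A))
      ((2 * max p (1 - p) / p) • (Φ ((1 / 2 : ℝ) • (A + B)) - Φ (natu A B (1 / 2)))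
          + Φ (TsallisEntropy A B p)) :=
  stmt16_general hA hB Φ hΦpos hΦA hΦB hp0 hp1
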